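/- arXiv:1806.02531 — 5 statements merged into one kernel-verified Lean document; each statement's English description precedes it below -/
import Mathlib

section
/- Let 1 → F → Γ → Λ → 1 be exact with F finite kernel of π: Γ → Λ. If Λ has at most polynomial growth then Γ has at most polynomial growth. -/
def wordBall {G : Type*} [Group G] (S : Set G) (R : ℕ) : Set G :=
  {g | ∃ l : List G, (∀ x ∈ l, x ∈ S) ∧ l.length ≤ R ∧ l.prod = g}

lemma wordBall_finite {G : Type*} [Group G] {S : Set G} (hS : S.Finite) :
    ∀ R : ℕ, (wordBall S R).Finite := by
  intro R
  induction R with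
  | zero =>
    apply Set.Finite.subset (Set.finite_singleton 1)
    rintro g ⟨l, hl, hlen, hprod⟩
    have : l = [] := List.length_eq_zero_iff.mp (Nat.le_zero.mp hlen)
    simp [this] at hprod
    simp [← hprod]
  | succ n ih =>
    apply Set.Finite.subset ((hS.image2 (· * ·) ih).insert 1)
    rintro g ⟨l, hl, hlen, hprod⟩
    cases l with
    | nil => left; simp at hprod; simp [← hprod]
    | cons a t =>
      right
      refine ⟨a, hl a (by simp), t.prod,
        ⟨t, fun x hx => hl x (by simp [hx]), ?_, rfl⟩, by simp [← hprod]⟩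
      simpa using Nat.succ_le_succ_iff.mp (by simpa using hlen)

/-- If `Γ → Λ` is surjective with finite kernel and `Λ` has at most polynomial
growth, then `Γ` has at most polynomial growth. -/
theorem polynomial_growth_of_quotient_by_finite_kernel {Γ Λ : Type*} [Group Γ] [Group Λ]
    (π : Γ →* Λ) (hsurj : Function.Surjective π) (hker : Finite π.ker)
    (S : Set Γ) (hfin : S.Finite) (hsym : ∀ x ∈ S, x⁻¹ ∈ S)
    (hgen : Subgroup.closure S = ⊤)
    (C m : ℕ) (hpoly : ∀ R : ℕ, 1 ≤ R → Nat.card (wordBall (π '' S) R) ≤ C * R ^ m) :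
    ∃ C' m' : ℕ, ∀ R : ℕ, 1 ≤ R → Nat.card (wordBall S R) ≤ C' * R ^ m' := by
  refine ⟨Nat.card π.ker * C, m, fun R hR => ?_⟩
  set s : Λ → Γ := Function.surjInv hsurj with hs
  have hsπ : ∀ lam, π (s lam) = lam := Function.surjInv_eq hsurj
  have hmem : ∀ g ∈ wordBall S R, π g ∈ wordBall (π '' S) R := by
    rintro g ⟨l, hl, hlen, hprod⟩
    exact ⟨l.map π, by simpa using fun x hx => Set.mem_image_of_mem π (hl x hx),
      by simpa using hlen, by simp [← hprod, map_list_prod]⟩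
  have hballfin : (wordBall (π '' S) R).Finite := wordBall_finite (hfin.image π) R
  haveI := hballfin.to_subtype
  set f : wordBall S R → π.ker × wordBall (π '' S) R := fun g =>
    (⟨g.1 * (s (π g.1))⁻¹, by simp [MonoidHom.mem_ker, hsπ]⟩, ⟨π g.1, hmem g.1 g.2⟩) with hf
  have hinj : Function.Injective f := by
    rintro ⟨g1, hg1⟩ ⟨g2, hg2⟩ h
    simp only [hf, Prod.mk.injEq, Subtype.mk.injEq] at h
    obtain ⟨h1, h2⟩ := h
    rw [h2] at h1
    exact Subtype.ext (mul_right_cancel h1)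
  calc Nat.card (wordBall S R) ≤ Nat.card (π.ker × wordBall (π '' S) R) :=
        Nat.card_le_card_of_injective f hinj
    _ = Nat.card π.ker * Nat.card (wordBall (π '' S) R) := Nat.card_prod _ _
    _ ≤ Nat.card π.ker * (C * R ^ m) := Nat.mul_le_mul_left _ (hpoly R hR)
    _ = Nat.card π.ker * C * R ^ m := by ring
end

section
/- A finitely generated virtually nilpotent group has at most polynomial growth. -/
open scoped commutatorElement

inductive CommTerm (α : Type*)
  | of : α → CommTerm α
  | comm : CommTerm α → CommTerm α → CommTerm α
  deriving DecidableEq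

namespace CommTerm

variable {α G : Type*} [Group G]

def weight : CommTerm α → ℕ
  | of _ => 1
  | comm x y => max x.weight y.weight + 1

def eval (f : α → G) : CommTerm α → G
  | of a => f a
  | comm x y => ⁅x.eval f, y.eval f⁆

theorem one_le_weight (t : CommTerm α) : 1 ≤ t.weight := by
  cases t <;> simp [weight]

theorem eval_mem_lowerCentralSeries (f : α → G) :
    ∀ t : CommTerm α, t.eval f ∈ (⊤ : Subgroup G).lowerCentralSeries (t.weight - 1)
  | of a => by simp [eval, weight]
  | comm x y => by
      have hx := eval_mem_lowerCentralSeries f x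
      have hy := eval_mem_lowerCentralSeries f y
      have := x.one_le_weight
      have := y.one_le_weight
      rcases le_total y.weight x.weight with h | h
      · have e : (comm x y).weight - 1 = x.weight - 1 + 1 := by simp [weight]; omega
        rw [eval, e, Subgroup.lowerCentralSeries_succ]
        exact Subgroup.commutator_mem_commutator hx (Subgroup.mem_top _)
      · have e : (comm x y).weight - 1 = y.weight - 1 + 1 := by simp [weight]; omega
        rw [eval, e, Subgroup.lowerCentralSeries_succ, Subgroup.commutator_comm]
        exact Subgroup.commutator_mem_commutator (Subgroup.mem_top _) hy

theorem eval_eq_one_of_lt_weight {c : ℕ} (hc : (⊤ : Subgroup G).lowerCentralSeries c = ⊥)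
    (f : α → G) {t : CommTerm α} (ht : c < t.weight) : t.eval f = 1 := by
  have h := Subgroup.lowerCentralSeries_antitone _ (Nat.le_sub_one_of_lt ht)
    (t.eval_mem_lowerCentralSeries f)
  rwa [hc, Subgroup.mem_bot] at h

theorem finite_setOf_weight_le [Finite α] : ∀ n, {t : CommTerm α | t.weight ≤ n}.Finite
  | 0 => Set.finite_empty.subset fun t ht => by have := t.one_le_weight; simp at ht; omega
  | n + 1 => by
      refine ((Set.finite_range of).union ((finite_setOf_weight_le n).image2 comm
        (finite_setOf_weight_le n))).subset ?_
      rintro (a | ⟨x, y⟩) h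
      · exact Or.inl ⟨a, rfl⟩
      · simp only [Set.mem_ofPred_eq, weight] at h
        exact Or.inr ⟨x, by simp; omega, y, by simp; omega, rfl⟩

theorem exists_pairwise_weight_le_list [Finite α] (c : ℕ) :
    ∃ W : List (CommTerm α), (∀ t, t ∈ W ↔ t.weight ≤ c) ∧
      W.Pairwise (fun a b => a.weight ≤ b.weight) := by
  refine ⟨(finite_setOf_weight_le c).toFinset.toList.mergeSort
    (fun a b => decide (a.weight ≤ b.weight)), fun t => by simp, ?_⟩
  refine (List.pairwise_mergeSort (fun a b d => ?_) (fun a b => ?_) _).imp (by simp)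
  · simpa using le_trans
  · simpa using le_total a.weight b.weight

section Collection

def powProd (f : α → G) : List (CommTerm α) → List ℕ → G
  | t :: ts, k :: ks => powProd f ts ks * t.eval f ^ k
  | _, _ => 1

variable (c : ℕ)

def moveRight (t : CommTerm α) : List (CommTerm α) → List (CommTerm α)
  | [] => []
  | z :: l => (if (comm t z).weight ≤ c then [comm t z, z] else [z]) ++ moveRight t l

variable {c}

theorem prod_moveRight_mul (hc : (⊤ : Subgroup G).lowerCentralSeries c = ⊥) (f : α → G)
    (t : CommTerm α) (l : List (CommTerm α)) :
    ((moveRight c t l).map (eval f)).prod * t.eval f = t.eval f * (l.map (eval f)).prod := by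
  induction l with
  | nil => simp [moveRight]
  | cons z l ih =>
    by_cases h : (comm t z).weight ≤ c
    · simp only [moveRight, if_pos h, List.cons_append, List.nil_append, List.map_cons,
        List.prod_cons, mul_assoc, ih, eval]
      rw [commutatorElement_def]
      group
    · have hcomm : ⁅t.eval f, z.eval f⁆ = 1 := eval_eq_one_of_lt_weight hc f (not_le.mp h)
      simp only [moveRight, if_neg h, List.cons_append, List.nil_append, List.map_cons,
        List.prod_cons, mul_assoc, ih]
      rw [← mul_assoc, ← mul_assoc, commutatorElement_eq_one_iff_mul_comm.mp hcomm]

theorem mem_moveRight {t z : CommTerm α} {l : List (CommTerm α)} (hz : z ∈ moveRight c t l) :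
    z ∈ l ∨ t.weight < z.weight ∧ z.weight ≤ c := by
  induction l with
  | nil => simp [moveRight] at hz
  | cons y l ih =>
    rw [moveRight, List.mem_append] at hz
    rcases hz with hz | hz
    · split_ifs at hz with h
      · rcases List.mem_pair.mp hz with rfl | rfl
        · exact Or.inr ⟨by simp [weight], h⟩
        · exact Or.inl List.mem_cons_self
      · exact Or.inl (by simp_all)
    · exact (ih hz).imp (List.mem_cons_of_mem _) id

theorem countP_weight_le_zero (l : List (CommTerm α)) : l.countP (·.weight ≤ 0) = 0 :=
  List.countP_eq_zero.mpr fun t _ => by have := t.one_le_weight; simp; omega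

theorem countP_weight_le_moveRight (t : CommTerm α) (l : List (CommTerm α)) (w : ℕ) :
    (moveRight c t l).countP (·.weight ≤ w + 1) ≤
      l.countP (·.weight ≤ w + 1) + l.countP (·.weight ≤ w) := by
  induction l with
  | nil => simp [moveRight]
  | cons z l ih =>
    have : (comm t z).weight = max t.weight z.weight + 1 := rfl
    rw [moveRight, List.countP_append]
    split_ifs <;> simp only [List.countP_cons, List.countP_nil] <;> split_ifs <;> simp_all <;> omega

variable (c) [DecidableEq α]

def collectLetter (t : CommTerm α) : List (CommTerm α) → List (CommTerm α)
  | [] => []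
  | y :: l => if y = t then moveRight c t (collectLetter t l) else y :: collectLetter t l

def exponents : List (CommTerm α) → List (CommTerm α) → List ℕ
  | [], _ => []
  | t :: ts, l => l.count t :: exponents ts (collectLetter c t l)

variable {c}

theorem prod_collectLetter_mul_pow (hc : (⊤ : Subgroup G).lowerCentralSeries c = ⊥)
    (f : α → G) (t : CommTerm α) (l : List (CommTerm α)) :
    ((collectLetter c t l).map (eval f)).prod * t.eval f ^ l.count t = (l.map (eval f)).prod := by
  induction l with
  | nil => simp [collectLetter]
  | cons y l ih =>
    by_cases hy : y = t
    · subst hy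
      rw [collectLetter, if_pos rfl, List.count_cons_self, pow_succ', ← mul_assoc,
        prod_moveRight_mul hc, mul_assoc, ih, List.map_cons, List.prod_cons]
    · simp only [collectLetter, if_neg hy, List.count_cons_of_ne hy, List.map_cons,
        List.prod_cons, mul_assoc, ih]

theorem mem_collectLetter {t z : CommTerm α} {l : List (CommTerm α)}
    (hz : z ∈ collectLetter c t l) : z ∈ l ∧ z ≠ t ∨ t.weight < z.weight ∧ z.weight ≤ c := by
  induction l with
  | nil => simp [collectLetter] at hz
  | cons y l ih =>
    rw [collectLetter] at hz
    split_ifs at hz with hy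
    · rcases mem_moveRight hz with hz | hz
      · exact (ih hz).imp (And.imp_left (List.mem_cons_of_mem _)) id
      · exact Or.inr hz
    · rcases List.mem_cons.mp hz with rfl | hz
      · exact Or.inl ⟨List.mem_cons_self, hy⟩
      · exact (ih hz).imp (And.imp_left (List.mem_cons_of_mem _)) id

theorem weight_le_of_mem_collectLetter {t z : CommTerm α} {l : List (CommTerm α)}
    (hl : ∀ y ∈ l, y.weight ≤ c) (hz : z ∈ collectLetter c t l) : z.weight ≤ c :=
  (mem_collectLetter hz).elim (fun h => hl z h.1) And.right

theorem prod_eq_powProd_exponents (hc : (⊤ : Subgroup G).lowerCentralSeries c = ⊥) (f : α → G) :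
    ∀ (ts l : List (CommTerm α)), ts.Pairwise (fun a b => a.weight ≤ b.weight) →
      (∀ z : CommTerm α, z.weight ≤ c → ∀ t ∈ ts, t.weight < z.weight → z ∈ ts) →
      (∀ z ∈ l, z ∈ ts) → (l.map (eval f)).prod = powProd f ts (exponents c ts l)
  | [], l, _, _, hl => by
    obtain rfl : l = [] := List.eq_nil_iff_forall_not_mem.mpr fun z hz => by simpa using hl z hz
    rfl
  | t :: ts, l, hsorted, hclosed, hl => by
    rw [exponents, powProd, ← prod_collectLetter_mul_pow hc f t l]
    congr 1
    have hne {z : CommTerm α} (hz : t.weight < z.weight) : z ≠ t := by rintro rfl; omega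
    refine prod_eq_powProd_exponents hc f ts _ (List.pairwise_cons.mp hsorted).2
      (fun z hz t' ht' hlt => ?_) (fun z hz => ?_)
    · have hz' := hclosed z hz t' (List.mem_cons_of_mem _ ht') hlt
      exact (List.mem_cons.mp hz').resolve_left
        (hne (lt_of_le_of_lt ((List.pairwise_cons.mp hsorted).1 t' ht') hlt))
    · rcases mem_collectLetter hz with ⟨hz, hzt⟩ | ⟨hlt, hzc⟩
      · exact (List.mem_cons.mp (hl z hz)).resolve_left hzt
      · exact (List.mem_cons.mp (hclosed z hzc t List.mem_cons_self hlt)).resolve_left (hne hlt)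

theorem length_exponents (ts l : List (CommTerm α)) : (exponents c ts l).length = ts.length := by
  induction ts generalizing l with
  | nil => rfl
  | cons t ts ih => simp [exponents, ih]

/-- A letter of weight `≤ w + 1` in the output arises from a letter of `l` by at most `w` successive
commutations with the occurrences of `t`. -/
theorem countP_weight_le_collectLetter (t : CommTerm α) :
    ∀ (l : List (CommTerm α)) (w : ℕ), (collectLetter c t l).countP (·.weight ≤ w + 1) ≤
      l.countP (·.weight ≤ w + 1) * (l.count t + 1) ^ w
  | [], _ => by simp [collectLetter]
  | y :: l, w => by
    have ih := countP_weight_le_collectLetter t l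
    have hmono : l.countP (·.weight ≤ w + 1) ≤ (y :: l).countP (·.weight ≤ w + 1) := by
      simp [List.countP_cons]
    rw [collectLetter]
    split_ifs with hy
    · subst hy
      set n := l.count y
      refine (countP_weight_le_moveRight _ _ w).trans ?_
      rw [List.count_cons_self]
      rcases w with _ | v
      · have := ih 0
        simp only [pow_zero, mul_one] at this ⊢
        rw [countP_weight_le_zero, add_zero]
        exact this.trans hmono
      · have h₁ := ih (v + 1)
        have h₂ := ih v
        have h₃ : l.countP (·.weight ≤ v + 1) ≤ l.countP (·.weight ≤ v + 1 + 1) :=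
          List.countP_mono_left fun z _ h => by simp at h ⊢; omega
        calc _ ≤ l.countP (·.weight ≤ v + 1 + 1) * ((n + 1) ^ (v + 1) + (n + 1) ^ v) := by
              rw [mul_add]; gcongr; exact h₂.trans (Nat.mul_le_mul_right _ h₃)
          _ ≤ (y :: l).countP (·.weight ≤ v + 1 + 1) * (n + 1 + 1) ^ (v + 1) := by
              gcongr
              calc (n + 1) ^ (v + 1) + (n + 1) ^ v = (n + 1) ^ v * (n + 2) := by ring
                _ ≤ (n + 2) ^ v * (n + 2) := by gcongr; omega
                _ = (n + 1 + 1) ^ (v + 1) := by ring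
    · have hpow : 1 ≤ (l.count t + 1) ^ w := Nat.one_le_pow _ _ (by omega)
      rw [List.count_cons_of_ne hy, List.countP_cons, List.countP_cons]
      have := ih w
      split_ifs <;> nlinarith

theorem length_collectLetter_add_one_le (hc : 1 ≤ c) (t : CommTerm α) {l : List (CommTerm α)}
    (hl : ∀ z ∈ l, z.weight ≤ c) : (collectLetter c t l).length + 1 ≤ (l.length + 1) ^ c := by
  obtain ⟨w, rfl⟩ : ∃ w, c = w + 1 := ⟨c - 1, by omega⟩
  have h := countP_weight_le_collectLetter (c := w + 1) t l w
  rw [List.countP_eq_length.mpr (by simpa using fun z hz => weight_le_of_mem_collectLetter hl hz),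
    List.countP_eq_length.mpr (by simpa using hl)] at h
  calc _ ≤ l.length * (l.length + 1) ^ w + (l.length + 1) ^ w := by
        gcongr
        · exact h.trans (Nat.mul_le_mul_left _
            (Nat.pow_le_pow_left (by simpa using List.count_le_length) _))
        · exact Nat.one_le_pow _ _ (by omega)
    _ = (l.length + 1) ^ (w + 1) := by ring

theorem lt_pow_of_mem_exponents (hc : 1 ≤ c) :
    ∀ (ts l : List (CommTerm α)) (M : ℕ), (∀ z ∈ l, z.weight ≤ c) → l.length + 1 ≤ M →
      ∀ k ∈ exponents c ts l, k < M ^ c ^ ts.length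
  | [], _, _, _, _, k, hk => by simp [exponents] at hk
  | t :: ts, l, M, hl, hM, k, hk => by
    rcases List.mem_cons.mp hk with rfl | hk
    · calc l.count t ≤ l.length := List.count_le_length
        _ < M := by omega
        _ ≤ M ^ c ^ (ts.length + 1) := Nat.le_self_pow (by positivity) M
    · have := lt_pow_of_mem_exponents hc ts _ (M ^ c)
        (fun z hz => weight_le_of_mem_collectLetter hl hz)
        ((length_collectLetter_add_one_le hc t hl).trans (Nat.pow_le_pow_left hM c)) k hk
      rwa [← pow_mul, ← pow_succ'] at this

theorem exists_prod_eq_powProd [Finite α] (hc₁ : 1 ≤ c)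
    (hc : (⊤ : Subgroup G).lowerCentralSeries c = ⊥) (f : α → G) :
    ∃ (N E : ℕ) (P : (Fin N → ℕ) → G), ∀ u : List α,
      ∃ v : Fin N → ℕ, (∀ i, v i < (u.length + 1) ^ E) ∧ (u.map f).prod = P v := by
  obtain ⟨W, hW, hsorted⟩ := exists_pairwise_weight_le_list (α := α) c
  refine ⟨W.length, c ^ W.length, fun v => powProd f W (List.ofFn v), fun u => ?_⟩
  set ks := exponents c W (u.map of)
  have hks : ks.length = W.length := length_exponents _ _
  refine ⟨fun i => ks.getD i 0, fun i => ?_, ?_⟩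
  · have hi : (i : ℕ) < ks.length := by have := i.2; omega
    show ks.getD i 0 < _
    rw [List.getD_eq_getElem _ _ hi]
    exact lt_pow_of_mem_exponents hc₁ W _ _ (by simpa [weight] using fun _ _ => hc₁) (by simp) _
      (List.getElem_mem _)
  · have hofFn : List.ofFn (fun i : Fin W.length => ks.getD i 0) = ks :=
      List.ext_getElem (by simp [hks]) fun i _ hi => by simp [List.getElem?_eq_getElem hi]
    have hmap : u.map f = (u.map of).map (eval f) := by simp [Function.comp_def, eval]
    show _ = powProd f W (List.ofFn _)
    rw [hofFn, hmap]
    exact prod_eq_powProd_exponents hc f W _ hsorted (fun z hz _ _ _ => (hW z).mpr hz)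
      fun z hz => (hW z).mpr (by simp at hz; obtain ⟨a, _, rfl⟩ := hz; simpa [weight] using hc₁)

end Collection

end CommTerm

section WordBall

variable {G : Type*} [Group G] {S : Set G} {R : ℕ}

theorem mem_wordBall_iff {g : G} :
    g ∈ wordBall S R ↔ ∃ u : List S, u.length ≤ R ∧ (u.map (↑)).prod = g := by
  constructor
  · rintro ⟨l, hl, hlen, rfl⟩
    lift l to List S using hl
    exact ⟨l, by simpa using hlen, rfl⟩
  · rintro ⟨u, hu, rfl⟩
    exact ⟨u.map (↑), fun x hx => by obtain ⟨y, -, rfl⟩ := List.mem_map.mp hx; exact y.2,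
      by simpa using hu, rfl⟩

theorem finite_wordBall (hS : S.Finite) (R : ℕ) : (wordBall S R).Finite := by
  have := hS.to_subtype
  refine ((List.finite_length_le S R).image fun u => (u.map (↑)).prod).subset fun g hg => ?_
  obtain ⟨u, hu, rfl⟩ := mem_wordBall_iff.mp hg
  exact ⟨u, hu, rfl⟩

theorem exists_card_wordBall_le_of_isNilpotent [Group.IsNilpotent G] (hS : S.Finite) :
    ∃ C m : ℕ, ∀ R : ℕ, 1 ≤ R → Nat.card (wordBall S R) ≤ C * R ^ m := by
  classical
  obtain ⟨n, hn⟩ := Subgroup.nilpotent_iff_lowerCentralSeries.mp ‹Group.IsNilpotent G›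
  have hc : (⊤ : Subgroup G).lowerCentralSeries (n + 1) = ⊥ :=
    le_bot_iff.mp (hn ▸ Subgroup.lowerCentralSeries_antitone _ n.le_succ)
  have := hS.to_subtype
  obtain ⟨N, E, P, hP⟩ := CommTerm.exists_prod_eq_powProd (by omega) hc ((↑) : S → G)
  refine ⟨2 ^ (E * N), E * N, fun R hR => ?_⟩
  have hsub : wordBall S R ⊆ Set.range fun v : Fin N → Fin ((R + 1) ^ E) => P fun i => v i := by
    intro g hg
    obtain ⟨u, hu, rfl⟩ := mem_wordBall_iff.mp hg
    obtain ⟨v, hv, hprod⟩ := hP u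
    exact ⟨fun i => ⟨v i, (hv i).trans_le (by gcongr)⟩, hprod.symm⟩
  calc Nat.card (wordBall S R) ≤ Nat.card (Fin N → Fin ((R + 1) ^ E)) :=
        (Nat.card_mono (Set.finite_range _) hsub).trans (Finite.card_range_le _)
    _ = (R + 1) ^ (E * N) := by simp [pow_mul]
    _ ≤ (2 * R) ^ (E * N) := by gcongr; omega
    _ = 2 ^ (E * N) * R ^ (E * N) := mul_pow ..

end WordBall

section Schreier

variable {Γ : Type*} [Group Γ] (H : Subgroup Γ)

noncomputable def schreierLetter (q : Γ ⧸ H) (s : Γ) : H :=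
  ⟨(s • q).out⁻¹ * s * q.out, by
    rw [mul_assoc, ← QuotientGroup.eq, QuotientGroup.out_eq', ← MulAction.Quotient.mk_smul_out,
      smul_eq_mul]⟩

/-- `Quotient.out` need not send the trivial coset to `1`, hence the last factor. -/
theorem exists_mem_wordBall_schreierLetter {S : Set Γ} {R : ℕ} {g : Γ} (hg : g ∈ wordBall S R) :
    ∃ h ∈ wordBall (Set.image2 (schreierLetter H) Set.univ S) R,
      g = (g : Γ ⧸ H).out * h * ((1 : Γ) : Γ ⧸ H).out⁻¹ := by
  obtain ⟨l, hl, hlen, rfl⟩ := hg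
  suffices ∃ lh : List H, (∀ x ∈ lh, x ∈ Set.image2 (schreierLetter H) Set.univ S) ∧
      lh.length = l.length ∧ l.prod = (l.prod : Γ ⧸ H).out * lh.prod * ((1 : Γ) : Γ ⧸ H).out⁻¹ by
    obtain ⟨lh, hmem, hlh, hprod⟩ := this
    exact ⟨lh.prod, ⟨lh, hmem, hlh ▸ hlen, rfl⟩, hprod⟩
  clear hlen
  induction l with
  | nil => exact ⟨[], by simp, rfl, by simp⟩
  | cons s l ih =>
    obtain ⟨lh, hmem, hlh, hprod⟩ := ih fun x hx => hl x (List.mem_cons_of_mem _ hx)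
    refine ⟨schreierLetter H (l.prod : Γ ⧸ H) s :: lh,
      List.forall_mem_cons.mpr ⟨⟨_, trivial, s, hl s List.mem_cons_self, rfl⟩, hmem⟩,
      by simp [hlh], ?_⟩
    rw [List.prod_cons, List.prod_cons, Subgroup.coe_mul,
      show ((s * l.prod : Γ) : Γ ⧸ H) = s • (l.prod : Γ ⧸ H) from rfl]
    conv_lhs => rw [hprod]
    simp only [schreierLetter]
    group

theorem card_wordBall_le_index_mul [H.FiniteIndex] {S : Set Γ} (hS : S.Finite) (R : ℕ) :
    Nat.card (wordBall S R) ≤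
      H.index * Nat.card (wordBall (Set.image2 (schreierLetter H) Set.univ S) R) := by
  have := (finite_wordBall (Set.finite_univ.image2 (schreierLetter H) hS) R).to_subtype
  have hsub : wordBall S R ⊆ Set.range fun p : (Γ ⧸ H) × wordBall
      (Set.image2 (schreierLetter H) Set.univ S) R => p.1.out * p.2 * ((1 : Γ) : Γ ⧸ H).out⁻¹ := by
    intro g hg
    obtain ⟨h, hh, hg⟩ := exists_mem_wordBall_schreierLetter H hg
    exact ⟨(g, ⟨h, hh⟩), hg.symm⟩
  calc _ ≤ Nat.card ((Γ ⧸ H) × wordBall (Set.image2 (schreierLetter H) Set.univ S) R) :=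
        (Nat.card_mono (Set.finite_range _) hsub).trans (Finite.card_range_le _)
    _ = _ := by rw [Nat.card_prod, Subgroup.index]

end Schreier

theorem polynomial_growth_of_virtually_nilpotent_general {Γ : Type*} [Group Γ]
    (H : Subgroup Γ) (hfi : H.FiniteIndex) (hnil : Group.IsNilpotent H)
    (S : Set Γ) (hfin : S.Finite) :
    ∃ C m : ℕ, ∀ R : ℕ, 1 ≤ R → Nat.card (wordBall S R) ≤ C * R ^ m := by
  obtain ⟨C, m, hC⟩ :=
    exists_card_wordBall_le_of_isNilpotent (Set.finite_univ.image2 (schreierLetter H) hfin)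
  refine ⟨H.index * C, m, fun R hR => ?_⟩
  calc Nat.card (wordBall S R) ≤ H.index * _ := card_wordBall_le_index_mul H hfin R
    _ ≤ H.index * (C * R ^ m) := Nat.mul_le_mul_left _ (hC R hR)
    _ = H.index * C * R ^ m := (mul_assoc ..).symm

/-- A finitely generated virtually nilpotent group has at most polynomial growth. -/
theorem polynomial_growth_of_virtually_nilpotent {Γ : Type*} [Group Γ]
    (H : Subgroup Γ) (hfi : H.FiniteIndex) (hnil : Group.IsNilpotent H)
    (S : Set Γ) (hfin : S.Finite) (hsym : ∀ x ∈ S, x⁻¹ ∈ S)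
    (hgen : Subgroup.closure S = ⊤) :
    ∃ C m : ℕ, ∀ R : ℕ, 1 ≤ R → Nat.card (wordBall S R) ≤ C * R ^ m :=
  polynomial_growth_of_virtually_nilpotent_general H hfi hnil S hfin
end

section
/- If a finitely generated group Γ is virtually nilpotent, then its algebraic entropy vanishes: h_w(Γ,S) = 0 for every finite symmetric generating set S. -/
/-!
A polynomial bound `|B_S(R)| ≤ C (R + 1) ^ D` forces `log |B_S(R)| / R → 0`, so it suffices to show
that finite sets in a virtually nilpotent group have polynomially growing word balls.

Passing to a finite-index subgroup `H` costs only a constant factor: by Reidemeister–Schreier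
rewriting, a word of length `n` is a coset representative times a word of length `n` in a finite
subset of `H`.

In a group with `γ_c = 1`, let `T ⊆ γ_j` be finite and `A ⊆ γ_(j+1)` the set of iterated
commutators `⁅s₁, ⁅s₂, …, ⁅s_k, t⁆⁆⁆` of elements of `T`; it is finite because those with more
than `c` entries are trivial.
Collecting a word of length `N` in `T` into the sorted product of its letters moves each letter past
at most `N` others and costs at most `(N + 1) ^ (2 c)` letters of `A`. Hence
`|B_T(N)| ≤ (N + 1) ^ |T| · |B_A(N (N + 1) ^ (2 c))|`, and descending induction on `j` gives
polynomial growth.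
-/

open Filter Topology

open Pointwise Asymptotics

section WordBall

variable {G : Type*} [Group G]

theorem wordBall_zero (S : Set G) : wordBall S 0 = 1 := by
  ext g
  simp [wordBall, eq_comm]

theorem wordBall_succ (S : Set G) (n : ℕ) : wordBall S (n + 1) = wordBall S n * insert 1 S := by
  ext g
  constructor
  · rintro ⟨l, hS, hlen, rfl⟩
    rcases l.eq_nil_or_concat' with rfl | ⟨l, s, rfl⟩
    · exact ⟨1, ⟨[], by simp⟩, 1, by simp⟩
    · simp only [List.mem_append, List.mem_singleton] at hS
      exact ⟨l.prod, ⟨l, fun x hx => hS x (.inl hx), by simpa using hlen, rfl⟩, s,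
        .inr (hS s (.inr rfl)), by simp⟩
  · rintro ⟨_, ⟨l, hS, hlen, rfl⟩, s, hs | hs, rfl⟩
    · exact ⟨l, hS, by omega, by simp [hs]⟩
    · refine ⟨l ++ [s], ?_, by simpa using hlen, by simp⟩
      simpa [or_imp, forall_and] using ⟨hS, hs⟩

theorem wordBall_eq_pow (S : Set G) (n : ℕ) : wordBall S n = insert 1 S ^ n := by
  induction n with
  | zero => exact wordBall_zero S
  | succ n ih => rw [wordBall_succ, ih, pow_succ]

theorem one_mem_wordBall (S : Set G) (n : ℕ) : (1 : G) ∈ wordBall S n := by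
  rw [wordBall_eq_pow]
  exact Set.one_mem_pow (Set.mem_insert 1 S)

theorem wordBall_mono {S T : Set G} {m n : ℕ} (hST : S ⊆ T) (hmn : m ≤ n) :
    wordBall S m ⊆ wordBall T n := by
  simp only [wordBall_eq_pow]
  exact Set.pow_subset_pow (Set.insert_subset_insert hST) (Set.mem_insert 1 T) hmn

theorem mul_mem_wordBall {S : Set G} {m n : ℕ} {g h : G} (hg : g ∈ wordBall S m)
    (hh : h ∈ wordBall S n) : g * h ∈ wordBall S (m + n) := by
  rw [wordBall_eq_pow] at *
  rw [pow_add]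
  exact Set.mul_mem_mul hg hh

theorem mem_wordBall_one {S : Set G} {s : G} (hs : s ∈ S) : s ∈ wordBall S 1 := by
  simp [wordBall_eq_pow, hs]

theorem Set.Finite.wordBall {S : Set G} (hS : S.Finite) (n : ℕ) : (wordBall S n).Finite := by
  induction n with
  | zero => simp [wordBall_zero]
  | succ n ih => simpa only [wordBall_succ] using ih.mul (hS.insert 1)

theorem image_wordBall {H : Type*} [Group H] (f : G →* H) (S : Set G) (n : ℕ) :
    f '' wordBall S n = wordBall (f '' S) n := by
  simp [wordBall_eq_pow, Set.image_pow, Set.image_insert_eq]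

end WordBall

open scoped commutatorElement

section Commutators

variable {G : Type*} [Group G]

theorem commutatorElement_mem_lowerCentralSeries_succ {w : ℕ} (g : G) {x : G}
    (hx : x ∈ (⊤ : Subgroup G).lowerCentralSeries w) :
    ⁅g, x⁆ ∈ (⊤ : Subgroup G).lowerCentralSeries (w + 1) := by
  rw [Subgroup.lowerCentralSeries_succ, Subgroup.commutator_comm]
  exact Subgroup.commutator_mem_commutator (Subgroup.mem_top g) hx

theorem eq_one_of_mem_lowerCentralSeries {c w : ℕ}
    (hc : (⊤ : Subgroup G).lowerCentralSeries c = ⊥) (hcw : c ≤ w) {x : G}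
    (hx : x ∈ (⊤ : Subgroup G).lowerCentralSeries w) : x = 1 := by
  rw [← Subgroup.mem_bot, ← hc]
  exact Subgroup.lowerCentralSeries_antitone _ hcw hx

def iterCommutators (T : Set G) : ℕ → Set G
  | 0 => T
  | k + 1 => Set.image2 (fun s x => ⁅s, x⁆) T (iterCommutators T k)

def higherCommutators (T : Set G) : Set G :=
  ⋃ k, iterCommutators T (k + 1)

theorem iterCommutators_subset_lowerCentralSeries {T : Set G} {j : ℕ}
    (hT : T ⊆ (⊤ : Subgroup G).lowerCentralSeries j) :
    ∀ k, iterCommutators T k ⊆ (⊤ : Subgroup G).lowerCentralSeries (j + k)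
  | 0 => hT
  | k + 1 => by
    rintro _ ⟨s, -, x, hx, rfl⟩
    exact commutatorElement_mem_lowerCentralSeries_succ s
      (iterCommutators_subset_lowerCentralSeries hT k hx)

theorem higherCommutators_subset_lowerCentralSeries {T : Set G} {j : ℕ}
    (hT : T ⊆ (⊤ : Subgroup G).lowerCentralSeries j) :
    higherCommutators T ⊆ (⊤ : Subgroup G).lowerCentralSeries (j + 1) :=
  Set.iUnion_subset fun k => (iterCommutators_subset_lowerCentralSeries hT (k + 1)).trans
    (Subgroup.lowerCentralSeries_antitone _ (by omega))

theorem commutatorElement_mem_higherCommutators {T : Set G} {k : ℕ} {s x : G} (hs : s ∈ T)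
    (hx : x ∈ iterCommutators T k) : ⁅s, x⁆ ∈ higherCommutators T :=
  Set.mem_iUnion_of_mem k (Set.mem_image2_of_mem hs hx)

theorem commutatorElement_mem_higherCommutators_of_mem {T : Set G} {s x : G} (hs : s ∈ T)
    (hx : x ∈ higherCommutators T) : ⁅s, x⁆ ∈ higherCommutators T := by
  obtain ⟨k, hk⟩ := Set.mem_iUnion.1 hx
  exact commutatorElement_mem_higherCommutators hs hk

theorem Set.Finite.iterCommutators {T : Set G} (hT : T.Finite) :
    ∀ k, (_root_.iterCommutators T k).Finite
  | 0 => hT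
  | k + 1 => hT.image2 _ (hT.iterCommutators k)

theorem Set.Finite.higherCommutators {c : ℕ} (hc : (⊤ : Subgroup G).lowerCentralSeries c = ⊥)
    {T : Set G} (hT : T.Finite) : (_root_.higherCommutators T).Finite := by
  refine (((Set.finite_Iio c).biUnion fun k _ => hT.iterCommutators (k + 1)).insert 1).subset ?_
  refine Set.iUnion_subset fun k x hx => ?_
  by_cases hk : k < c
  · exact Set.mem_insert_of_mem _ (Set.mem_biUnion hk hx)
  · have hx' := iterCommutators_subset_lowerCentralSeries (j := 0)
      (fun y _ => Subgroup.mem_top y) (k + 1) hx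
    exact .inl (eq_one_of_mem_lowerCentralSeries hc (by omega) hx')

end Commutators

section Collection

variable {G : Type*} [Group G] {c : ℕ} {T A : Set G}

theorem pow_add_pow_succ_le (n e : ℕ) : (n + 1) ^ e + (n + 1) ^ (e + 1) ≤ (n + 1 + 1) ^ (e + 1) :=
  calc (n + 1) ^ e + (n + 1) ^ (e + 1) = (n + 1) ^ e * (n + 1 + 1) := by ring
    _ ≤ (n + 1 + 1) ^ e * (n + 1 + 1) := Nat.mul_le_mul_right _ (Nat.pow_le_pow_left (by omega) e)
    _ = (n + 1 + 1) ^ (e + 1) := (pow_succ _ _).symm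

/-- Moving `x` past a letter `s` costs the commutator `⁅s, x⁆`, one level deeper in the lower
central series; `L w n = (n + 1) ^ (c - w) - 1` satisfies `L (w + 1) n + 1 + L w n ≤ L w (n + 1)`. -/
theorem exists_conj_eq_mul_of_lowerCentralSeries
    (hc : (⊤ : Subgroup G).lowerCentralSeries c = ⊥) (hA : ∀ s ∈ T, ∀ a ∈ A, ⁅s, a⁆ ∈ A)
    {n : ℕ} {g : G} (hg : g ∈ wordBall T n) {w : ℕ} {x : G}
    (hx : x ∈ (⊤ : Subgroup G).lowerCentralSeries w) (hxA : ∀ s ∈ T, ⁅s, x⁆ ∈ A) :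
    ∃ u ∈ wordBall A ((n + 1) ^ (c - w) - 1), g * x * g⁻¹ = u * x := by
  induction n generalizing g w x with
  | zero =>
    rw [wordBall_zero, Set.mem_one] at hg
    exact ⟨1, one_mem_wordBall _ _, by simp [hg]⟩
  | succ n ih =>
    by_cases hcw : c ≤ w
    · obtain rfl := eq_one_of_mem_lowerCentralSeries hc hcw hx
      exact ⟨1, one_mem_wordBall _ _, by simp⟩
    have hmono : (n + 1) ^ (c - w) ≤ (n + 1 + 1) ^ (c - w) := Nat.pow_le_pow_left (by omega) _
    rw [wordBall_succ] at hg
    obtain ⟨g, hg, s, hs, rfl⟩ := hg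
    obtain ⟨u₁, hu₁, hgx⟩ := ih hg hx hxA
    rcases hs with rfl | hs
    · exact ⟨u₁, wordBall_mono le_rfl (by omega) hu₁, by simpa using hgx⟩
    obtain ⟨u₂, hu₂, hgsx⟩ := ih hg (commutatorElement_mem_lowerCentralSeries_succ s hx)
      (fun s' hs' => hA s' hs' _ (hxA s hs))
    have hu := mul_mem_wordBall (mul_mem_wordBall hu₂ (mem_wordBall_one (hxA s hs))) hu₁
    refine ⟨u₂ * ⁅s, x⁆ * u₁, wordBall_mono le_rfl ?_ hu, ?_⟩
    · have hle := pow_add_pow_succ_le n (c - (w + 1))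
      rw [show c - (w + 1) + 1 = c - w by omega] at hle
      have : 0 < (n + 1) ^ (c - w) := by positivity
      have : 0 < (n + 1) ^ (c - (w + 1)) := by positivity
      omega
    · calc g * s * x * (g * s)⁻¹ = (g * ⁅s, x⁆ * g⁻¹) * (g * x * g⁻¹) := by
            simp only [commutatorElement_def]; group
        _ = u₂ * ⁅s, x⁆ * u₁ * x := by rw [hgsx, hgx]; group

theorem exists_conj_eq_mul (hc : (⊤ : Subgroup G).lowerCentralSeries c = ⊥)
    (hA : ∀ s ∈ T, ∀ a ∈ A, ⁅s, a⁆ ∈ A) {n : ℕ} {g : G} (hg : g ∈ wordBall T n) {x : G}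
    (hxA : ∀ s ∈ T, ⁅s, x⁆ ∈ A) : ∃ u ∈ wordBall A ((n + 1) ^ c - 1), g * x * g⁻¹ = u * x :=
  exists_conj_eq_mul_of_lowerCentralSeries hc hA hg (w := 0) (Subgroup.mem_top x) hxA

theorem conj_mem_wordBall (hc : (⊤ : Subgroup G).lowerCentralSeries c = ⊥)
    (hA : ∀ s ∈ T, ∀ a ∈ A, ⁅s, a⁆ ∈ A) {n : ℕ} {g : G} (hg : g ∈ wordBall T n) {L : ℕ} {u : G}
    (hu : u ∈ wordBall A L) : g * u * g⁻¹ ∈ wordBall A (L * (n + 1) ^ c) := by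
  induction L generalizing u with
  | zero =>
    rw [wordBall_zero, Set.mem_one] at hu
    simp [hu, one_mem_wordBall]
  | succ L ih =>
    rw [wordBall_succ] at hu
    obtain ⟨u, hu, a, ha, rfl⟩ := hu
    have hconj : g * (u * a) * g⁻¹ = (g * u * g⁻¹) * (g * a * g⁻¹) := by group
    rw [hconj, add_one_mul]
    refine mul_mem_wordBall (ih hu) ?_
    rcases ha with rfl | ha
    · simpa using one_mem_wordBall A _
    obtain ⟨v, hv, hga⟩ := exists_conj_eq_mul hc hA hg (hA · · a ha)
    rw [hga]
    have : 0 < (n + 1) ^ c := by positivity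
    exact wordBall_mono le_rfl (by omega) (mul_mem_wordBall hv (mem_wordBall_one ha))

end Collection

section OrderedProduct

variable {G : Type*} [Group G] {ι : Type*}

theorem list_prod_map_mem_wordBall (τ : ι → G) (l : List ι) :
    (l.map τ).prod ∈ wordBall (Set.range τ) l.length :=
  ⟨l.map τ, by simp, by simp, rfl⟩

theorem Multiset.finite_setOf_card_le_and_ncard_le [Fintype ι] [DecidableEq ι] (N : ℕ) :
    {m : Multiset ι | Multiset.card m ≤ N}.Finite ∧
      {m : Multiset ι | Multiset.card m ≤ N}.ncard ≤ (N + 1) ^ Fintype.card ι := by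
  set t := Fintype.piFinset fun _ : ι => Finset.range (N + 1)
  have hmaps : Set.MapsTo (fun m i => m.count i) {m : Multiset ι | Multiset.card m ≤ N} t :=
    fun m hm => by simpa [t, Nat.lt_succ_iff] using fun i => (Multiset.count_le_card i m).trans hm
  have hinj : Set.InjOn (fun m i => m.count i) {m : Multiset ι | Multiset.card m ≤ N} :=
    fun m _ m' _ h => Multiset.ext.2 (congrFun h)
  refine ⟨.of_injOn hmaps hinj t.finite_toSet, ?_⟩
  calc _ ≤ (t : Set (ι → ℕ)).ncard := Set.ncard_le_ncard_of_injOn _ hmaps hinj t.finite_toSet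
    _ = (N + 1) ^ Fintype.card ι := by rw [Set.ncard_coe_finset]; simp [t]

variable [LinearOrder ι]

theorem Multiset.sort_cons_eq_orderedInsert (m : Multiset ι) (i : ι) :
    (i ::ₘ m).sort = m.sort.orderedInsert (· ≤ ·) i := by
  induction m using Quot.inductionOn with
  | h l => simp [List.mergeSort_eq_insertionSort]

def orderedProd (τ : ι → G) (m : Multiset ι) : G :=
  (m.sort.map τ).prod

theorem exists_orderedProd_cons (τ : ι → G) (m : Multiset ι) (i : ι) :
    ∃ P ∈ wordBall (Set.range τ) (Multiset.card m), ∃ Q ∈ wordBall (Set.range τ) (Multiset.card m),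
      orderedProd τ m = P * Q ∧ orderedProd τ (i ::ₘ m) = P * τ i * Q := by
  have hlen := Multiset.length_sort (s := m) (· ≤ ·)
  refine ⟨_, wordBall_mono le_rfl ?_ (list_prod_map_mem_wordBall τ (m.sort.takeWhile (¬i ≤ ·))),
    _, wordBall_mono le_rfl ?_ (list_prod_map_mem_wordBall τ (m.sort.dropWhile (¬i ≤ ·))), ?_, ?_⟩
  · exact hlen ▸ (List.takeWhile_sublist _).length_le
  · exact hlen ▸ (List.dropWhile_sublist _).length_le
  · rw [orderedProd, ← List.prod_append, ← List.map_append, List.takeWhile_append_dropWhile]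
  · rw [orderedProd, Multiset.sort_cons_eq_orderedInsert, List.orderedInsert_eq_take_drop]
    simp [mul_assoc]

end OrderedProduct

section Nilpotent

variable {G : Type*} [Group G] {c : ℕ} {ι : Type*} [LinearOrder ι]

theorem exists_eq_mul_orderedProd (hc : (⊤ : Subgroup G).lowerCentralSeries c = ⊥) (τ : ι → G)
    {N : ℕ} : ∀ n ≤ N, ∀ g ∈ wordBall (Set.range τ) n, ∃ m : Multiset ι, Multiset.card m ≤ n ∧
      ∃ u ∈ wordBall (higherCommutators (Set.range τ)) (n * (N + 1) ^ (2 * c)),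
        g = u * orderedProd τ m := by
  have hA : ∀ s ∈ Set.range τ, ∀ a ∈ higherCommutators (Set.range τ),
      ⁅s, a⁆ ∈ higherCommutators (Set.range τ) :=
    fun s hs a ha => commutatorElement_mem_higherCommutators_of_mem hs ha
  intro n
  induction n with
  | zero =>
    intro _ g hg
    rw [wordBall_zero, Set.mem_one] at hg
    exact ⟨0, le_rfl, 1, one_mem_wordBall _ _, by simp [hg, orderedProd]⟩
  | succ n ih =>
    intro hn g hg
    rw [wordBall_succ] at hg
    obtain ⟨g, hg, s, hs, rfl⟩ := hg
    obtain ⟨m, hm, u, hu, rfl⟩ := ih (by omega) g hg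
    rcases hs with rfl | ⟨i, rfl⟩
    · exact ⟨m, by omega, u, wordBall_mono le_rfl (by gcongr; omega) hu, by simp⟩
    obtain ⟨P, hP, Q, hQ, hPQ, hPiQ⟩ := exists_orderedProd_cons τ m i
    obtain ⟨v, hv, hQi⟩ := exists_conj_eq_mul hc hA (n := N) (wordBall_mono le_rfl (by omega) hQ)
      (fun s hs => commutatorElement_mem_higherCommutators (k := 0) hs ⟨i, rfl⟩)
    have hv' : v ∈ wordBall _ ((N + 1) ^ c) := wordBall_mono le_rfl (Nat.sub_le _ _) hv
    have hPv := conj_mem_wordBall hc hA (n := N) (wordBall_mono le_rfl (by omega) hP) hv'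
    refine ⟨i ::ₘ m, by simpa using hm, u * (P * v * P⁻¹), ?_, ?_⟩
    · convert mul_mem_wordBall hu hPv using 2
      rw [two_mul, pow_add]
      ring
    · calc u * orderedProd τ m * τ i = u * (P * (Q * τ i * Q⁻¹) * Q) := by rw [hPQ]; group
        _ = u * (P * v * P⁻¹) * orderedProd τ (i ::ₘ m) := by rw [hQi, hPiQ]; group

theorem card_wordBall_le_mul_card_wordBall_higherCommutators [Fintype ι]
    (hc : (⊤ : Subgroup G).lowerCentralSeries c = ⊥) (τ : ι → G) (N : ℕ) :
    Nat.card (wordBall (Set.range τ) N) ≤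
      (N + 1) ^ Fintype.card ι *
        Nat.card (wordBall (higherCommutators (Set.range τ)) (N * (N + 1) ^ (2 * c))) := by
  classical
  set X := wordBall (higherCommutators (Set.range τ)) (N * (N + 1) ^ (2 * c))
  set Y := orderedProd τ '' {m : Multiset ι | Multiset.card m ≤ N}
  obtain ⟨hfin, hcard⟩ := Multiset.finite_setOf_card_le_and_ncard_le (ι := ι) N
  have hsub : wordBall (Set.range τ) N ⊆ X * Y := by
    intro g hg
    obtain ⟨m, hm, u, hu, rfl⟩ := exists_eq_mul_orderedProd hc τ N le_rfl g hg
    exact Set.mul_mem_mul hu ⟨m, hm, rfl⟩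
  have hXY : (X * Y).Finite :=
    (((Set.finite_range τ).higherCommutators hc).wordBall _).mul (hfin.image _)
  calc Nat.card (wordBall (Set.range τ) N) ≤ Nat.card ↥(X * Y) := Nat.card_mono hXY hsub
    _ ≤ Nat.card X * Nat.card Y := Set.natCard_mul_le
    _ ≤ Nat.card X * (N + 1) ^ Fintype.card ι := by
      rw [Nat.card_coe_set_eq Y]
      exact Nat.mul_le_mul_left _ ((Set.ncard_image_le hfin).trans hcard)
    _ = _ := mul_comm _ _

end Nilpotent

section Growth

variable {G : Type*} [Group G]

def HasPolynomialGrowth (S : Set G) : Prop :=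
  ∃ C D : ℕ, ∀ n, Nat.card (wordBall S n) ≤ C * (n + 1) ^ D

theorem hasPolynomialGrowth_of_subset_one {S : Set G} (hS : S ⊆ {1}) : HasPolynomialGrowth S := by
  refine ⟨1, 0, fun n => ?_⟩
  have hball : wordBall S n ⊆ {1} := by
    simpa [wordBall_eq_pow] using wordBall_mono (n := n) hS le_rfl
  simpa using Nat.card_mono (Set.finite_singleton 1) hball

theorem hasPolynomialGrowth_of_subset_lowerCentralSeries {c : ℕ}
    (hc : (⊤ : Subgroup G).lowerCentralSeries c = ⊥) {j : ℕ} {T : Set G} (hT : T.Finite)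
    (hTj : T ⊆ (⊤ : Subgroup G).lowerCentralSeries j) : HasPolynomialGrowth T := by
  obtain ⟨k, hk⟩ : ∃ k, c ≤ j + k := ⟨c, by omega⟩
  induction k generalizing j T with
  | zero =>
    exact hasPolynomialGrowth_of_subset_one fun x hx =>
      eq_one_of_mem_lowerCentralSeries hc (by omega) (hTj hx)
  | succ k ih =>
    obtain ⟨d, τ, -, rfl⟩ := hT.fin_param
    obtain ⟨C, D, hCD⟩ := ih ((Set.finite_range τ).higherCommutators hc)
      (higherCommutators_subset_lowerCentralSeries hTj) (by omega)
    refine ⟨C, d + (2 * c + 1) * D, fun N => ?_⟩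
    have hM : N * (N + 1) ^ (2 * c) + 1 ≤ (N + 1) ^ (2 * c + 1) := by
      have : 1 ≤ (N + 1) ^ (2 * c) := Nat.one_le_pow _ _ N.succ_pos
      rw [pow_succ]
      nlinarith
    calc Nat.card (wordBall (Set.range τ) N)
        ≤ (N + 1) ^ d * Nat.card (wordBall _ (N * (N + 1) ^ (2 * c))) := by
          simpa using card_wordBall_le_mul_card_wordBall_higherCommutators hc τ N
      _ ≤ (N + 1) ^ d * (C * (N * (N + 1) ^ (2 * c) + 1) ^ D) := by gcongr; exact hCD _
      _ ≤ (N + 1) ^ d * (C * ((N + 1) ^ (2 * c + 1)) ^ D) := by gcongr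
      _ = C * (N + 1) ^ (d + (2 * c + 1) * D) := by rw [← pow_mul, pow_add]; ring

theorem Set.Finite.hasPolynomialGrowth [Group.IsNilpotent G] {T : Set G} (hT : T.Finite) :
    HasPolynomialGrowth T := by
  obtain ⟨c, hc⟩ := Subgroup.nilpotent_iff_lowerCentralSeries.1 ‹Group.IsNilpotent G›
  exact hasPolynomialGrowth_of_subset_lowerCentralSeries hc (j := 0) hT
    fun x _ => Subgroup.mem_top x

theorem HasPolynomialGrowth.image {H : Type*} [Group H] {S : Set G} (h : HasPolynomialGrowth S)
    {f : G →* H} (hf : Function.Injective f) : HasPolynomialGrowth (f '' S) := by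
  obtain ⟨C, D, hCD⟩ := h
  refine ⟨C, D, fun n => ?_⟩
  rw [← image_wordBall, Nat.card_image_of_injective hf]
  exact hCD n

theorem HasPolynomialGrowth.of_subset_mul {S T R : Set G} (hT : HasPolynomialGrowth T)
    (hTfin : T.Finite) (hR : R.Finite) (h : ∀ n, wordBall S n ⊆ R * wordBall T n) :
    HasPolynomialGrowth S := by
  obtain ⟨C, D, hCD⟩ := hT
  refine ⟨Nat.card R * C, D, fun n => ?_⟩
  calc Nat.card (wordBall S n) ≤ Nat.card ↥(R * wordBall T n) :=
        Nat.card_mono (hR.mul (hTfin.wordBall n)) (h n)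
    _ ≤ Nat.card R * Nat.card (wordBall T n) := Set.natCard_mul_le
    _ ≤ Nat.card R * (C * (n + 1) ^ D) := by gcongr; exact hCD n
    _ = Nat.card R * C * (n + 1) ^ D := (mul_assoc _ _ _).symm

/-- Reidemeister–Schreier: for left coset representatives `R ∋ 1`, the letter `s` moves past
`r ∈ R` as `s * r = r' * (r'⁻¹ * s * r)` with `r'` the representative of `s * r H`. -/
theorem exists_wordBall_subset_mul (H : Subgroup G) [H.FiniteIndex] {S : Set G} (hS : S.Finite) :
    ∃ R : Set G, R.Finite ∧ ∃ T : Set G, T.Finite ∧ T ⊆ H ∧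
      ∀ n, wordBall S n ⊆ R * wordBall T n := by
  set R : Set G := insert 1 (Set.range fun q : G ⧸ H => q.out)
  have hR : R.Finite := (Set.finite_range _).insert 1
  refine ⟨R, hR, R⁻¹ * S * R ∩ H, ((hR.inv.mul hS).mul hR).inter_of_left _,
    Set.inter_subset_right, fun n => ?_⟩
  induction n with
  | zero => simp [wordBall_zero, R]
  | succ n ih =>
    rintro g hg
    rw [wordBall_eq_pow, pow_succ', ← wordBall_eq_pow] at hg
    obtain ⟨s, hs, g, hg, rfl⟩ := hg
    obtain ⟨r, hr, h, hh, rfl⟩ := ih hg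
    rcases hs with rfl | hs
    · exact ⟨r, hr, h, wordBall_mono le_rfl n.le_succ hh, by simp⟩
    set r' := (s * r : G ⧸ H).out
    have hr' : r' ∈ R := Set.mem_insert_of_mem _ ⟨_, rfl⟩
    have ht : r'⁻¹ * s * r ∈ R⁻¹ * S * R ∩ H :=
      ⟨Set.mul_mem_mul (Set.mul_mem_mul (by simpa using hr') hs) hr,
        by simpa [r', mul_assoc] using QuotientGroup.eq.1 (QuotientGroup.out_eq' (s * r : G ⧸ H))⟩
    refine ⟨r', hr', r'⁻¹ * s * r * h, ?_, by group⟩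
    rw [add_comm]
    exact mul_mem_wordBall (mem_wordBall_one ht) hh

theorem hasPolynomialGrowth_of_finiteIndex (H : Subgroup G) [H.FiniteIndex]
    [Group.IsNilpotent H] {S : Set G} (hS : S.Finite) : HasPolynomialGrowth S := by
  obtain ⟨R, hR, T, hT, hTH, hST⟩ := exists_wordBall_subset_mul H hS
  have hT₀ : (H.subtype ⁻¹' T).Finite := hT.preimage H.subtype_injective.injOn
  have hT₀T : H.subtype '' (H.subtype ⁻¹' T) = T := by
    simpa [Set.image_preimage_eq_iff] using hTH
  exact (hT₀T ▸ hT₀.hasPolynomialGrowth.image H.subtype_injective).of_subset_mul hT hR hST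

theorem tendsto_log_div_of_le_mul_pow {f : ℕ → ℕ} (hf : ∀ n, 0 < f n) {C D : ℕ}
    (h : ∀ n, f n ≤ C * (n + 1) ^ D) :
    Tendsto (fun n => Real.log (f n) / n) atTop (𝓝 0) := by
  have hC : 0 < C := Nat.pos_of_mul_pos_right ((hf 0).trans_le (h 0))
  have hlog : (fun n : ℕ => Real.log (n + 1)) =o[atTop] (fun n => (n : ℝ)) := by
    have h1 : Tendsto (fun n : ℕ => (n : ℝ) + 1) atTop atTop :=
      tendsto_atTop_add_const_right _ 1 tendsto_natCast_atTop_atTop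
    refine (Real.isLittleO_log_id_atTop.comp_tendsto h1).trans_isBigO ?_
    refine IsBigO.of_bound 2 ?_
    filter_upwards [eventually_ge_atTop 1] with n hn
    have : (1 : ℝ) ≤ n := by exact_mod_cast hn
    simp only [Function.comp, id, Real.norm_eq_abs]
    rw [abs_of_pos (by positivity), abs_of_pos (by positivity)]
    linarith
  have hbound : (fun n : ℕ => Real.log C + D * Real.log (n + 1)) =o[atTop] (fun n => (n : ℝ)) :=
    (isLittleO_const_left.2 (.inr (tendsto_norm_atTop_atTop.comp tendsto_natCast_atTop_atTop))).add
      (hlog.const_mul_left _)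
  refine squeeze_zero (fun n => div_nonneg (Real.log_natCast_nonneg _) n.cast_nonneg)
    (fun n => div_le_div_of_nonneg_right ?_ n.cast_nonneg) hbound.tendsto_div_nhds_zero
  calc Real.log (f n) ≤ Real.log (C * (n + 1) ^ D : ℕ) :=
        Real.log_le_log (by exact_mod_cast hf n) (by exact_mod_cast h n)
    _ = Real.log C + D * Real.log (n + 1) := by
        push_cast
        rw [Real.log_mul (by positivity) (by positivity), Real.log_pow]

theorem HasPolynomialGrowth.tendsto_log_card_wordBall_div {S : Set G} (h : HasPolynomialGrowth S)
    (hS : S.Finite) :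
    Tendsto (fun R : ℕ => Real.log (Nat.card (wordBall S R)) / R) atTop (𝓝 0) := by
  obtain ⟨C, D, hCD⟩ := h
  refine tendsto_log_div_of_le_mul_pow (fun n => ?_) hCD
  have := (hS.wordBall n).to_subtype
  exact Nat.card_pos_iff.2 ⟨⟨⟨1, one_mem_wordBall S n⟩⟩, inferInstance⟩

end Growth

theorem entropy_zero_of_virtually_nilpotent_general {Γ : Type*} [Group Γ]
    (H : Subgroup Γ) (hfi : H.FiniteIndex) (hnil : Group.IsNilpotent H)
    (S : Set Γ) (hfin : S.Finite) :
    Tendsto (fun R : ℕ => Real.log (Nat.card (wordBall S R)) / R) atTop (𝓝 0) :=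
  (hasPolynomialGrowth_of_finiteIndex H hfin).tendsto_log_card_wordBall_div hfin

/-- A finitely generated virtually nilpotent group has vanishing algebraic entropy. -/
theorem entropy_zero_of_virtually_nilpotent {Γ : Type*} [Group Γ]
    (H : Subgroup Γ) (hfi : H.FiniteIndex) (hnil : Group.IsNilpotent H)
    (S : Set Γ) (hfin : S.Finite) (hsym : ∀ x ∈ S, x⁻¹ ∈ S)
    (hgen : Subgroup.closure S = ⊤) :
    Tendsto (fun R : ℕ => Real.log (Nat.card (wordBall S R)) / R) atTop (𝓝 0) :=
  entropy_zero_of_virtually_nilpotent_general H hfi hnil S hfin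
end

section
/- Let Γ = Z^k ⋊_ρ Z where ρ: Z → Aut(Z^k) = GL(k,Z). If all eigenvalues of the matrix ρ(1) have absolute value 1, then Γ is virtually nilpotent. -/
/-!
By Kronecker's theorem the eigenvalues of `A` are roots of unity, so `B = A ^ m - 1` is nilpotent
for some `m > 0`, and `H = N ⊔ ⟨t ^ m⟩` has index at most `m`. Since `t ^ m` acts on `N ≅ ℤ ^ k`
as `1 + B` and `N` is abelian, the images `P j ≤ N` of the lattices `B ^ j ℤ ^ k` satisfy
`⁅H, H⁆ ≤ P 0 = N` and `⁅P j, H⁆ ≤ P (j + 1)`; as `B ^ n = 0`, this central series reaches `1`.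
-/

open Polynomial Subgroup
open scoped commutatorElement

theorem Polynomial.Monic.pow_eq_one_of_norm_aroots_eq_one {p : ℤ[X]} (hp : p.Monic)
    (h : ∀ z ∈ p.aroots ℂ, ‖z‖ = 1) {z : ℂ} (hz : z ∈ p.aroots ℂ) : ∃ n, 0 < n ∧ z ^ n = 1 := by
  refine pow_eq_one_of_mahlerMeasure_eq_one ?_ (norm_ne_zero_iff.mp (by simp [h z hz])) hz
  rw [mahlerMeasure_eq_leadingCoeff_mul_prod_roots, (hp.map _).leadingCoeff, norm_one, one_mul]
  refine Multiset.prod_eq_one fun x hx => ?_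
  obtain ⟨a, ha, rfl⟩ := Multiset.mem_map.mp hx
  simp [h a (by rwa [aroots_def, algebraMap_int_eq])]

theorem Polynomial.Splits.dvd_X_pow_sub_one_pow {K : Type*} [Field K] {p : K[X]} (hp : p.Splits)
    (hmonic : p.Monic) {m : ℕ} (h : ∀ μ ∈ p.roots, μ ^ m = 1) :
    p ∣ (X ^ m - 1) ^ p.natDegree := by
  conv_lhs => rw [hp.eq_prod_roots_of_monic hmonic]
  rw [hp.natDegree_eq_card_roots, ← Multiset.prod_replicate, ← Multiset.map_const']
  exact Multiset.prod_dvd_prod_of_dvd _ _ fun μ hμ =>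
    dvd_iff_isRoot.mpr (by simp [h μ hμ])

theorem Matrix.exists_isNilpotent_pow_sub_one {K n : Type*} [Field K] [Fintype n] [DecidableEq n]
    (M : Matrix n n K) (hsplit : M.charpoly.Splits)
    (h : ∀ μ ∈ M.charpoly.roots, ∃ m, 0 < m ∧ μ ^ m = 1) :
    ∃ m, 0 < m ∧ IsNilpotent (M ^ m - 1) := by
  choose! ord hord hpow using h
  set m := (M.charpoly.roots.map ord).prod
  have hm : 0 < m := Multiset.prod_pos fun _ h => by
    obtain ⟨μ, hμ, rfl⟩ := Multiset.mem_map.mp h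
    exact hord μ hμ
  have hroots : ∀ μ ∈ M.charpoly.roots, μ ^ m = 1 := fun μ hμ => by
    obtain ⟨c, hc⟩ : ord μ ∣ m := Multiset.dvd_prod (Multiset.mem_map_of_mem ord hμ)
    rw [hc, pow_mul, hpow μ hμ, one_pow]
  obtain ⟨q, hq⟩ := hsplit.dvd_X_pow_sub_one_pow M.charpoly_monic hroots
  exact ⟨m, hm, M.charpoly.natDegree, by simpa [aeval_self_charpoly] using congrArg (aeval M) hq⟩

theorem Matrix.exists_isNilpotent_pow_sub_one_of_norm_eq_one {n : Type*} [Fintype n]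
    [DecidableEq n] (A : Matrix n n ℤ)
    (h : ∀ μ : ℂ, (A.map (Int.cast : ℤ → ℂ)).charpoly.IsRoot μ → ‖μ‖ = 1) :
    ∃ m, 0 < m ∧ IsNilpotent (A ^ m - 1) := by
  have hchar : (A.map (Int.cast : ℤ → ℂ)).charpoly = A.charpoly.map (algebraMap ℤ ℂ) :=
    A.charpoly_map (Int.castRingHom ℂ)
  have hroots : ∀ μ ∈ A.charpoly.aroots ℂ, ‖μ‖ = 1 := fun μ hμ =>
    h μ (by rw [hchar]; exact isRoot_of_mem_roots hμ)
  obtain ⟨m, hm, hnil⟩ := (A.map (Int.cast : ℤ → ℂ)).exists_isNilpotent_pow_sub_one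
    (IsAlgClosed.splits _) fun μ hμ => A.charpoly_monic.pow_eq_one_of_norm_aroots_eq_one hroots
      (by rwa [hchar] at hμ)
  refine ⟨m, hm, (IsNilpotent.map_iff (f := (Int.castRingHom ℂ).mapMatrix)
    (Matrix.map_injective Int.cast_injective)).mp ?_⟩
  rwa [map_sub, map_pow, map_one]

namespace Subgroup

variable {G : Type*} [Group G]

theorem commutator_closure_le {K L : Subgroup G} {S : Set G}
    (hL : closure S ≤ normalizer (L : Set G)) (h : ∀ g ∈ S, ∀ x ∈ K, ⁅x, g⁆ ∈ L) :
    ⁅K, closure S⁆ ≤ L := by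
  rw [commutator_le]
  intro x hx g hg
  induction hg using closure_induction with
  | mem g hg => exact h g hg x hx
  | one => simp [L.one_mem]
  | mul g g' hg _ ih ih' =>
    have : ⁅x, g * g'⁆ = ⁅x, g⁆ * (g * ⁅x, g'⁆ * g⁻¹) := by group
    rw [this]
    exact mul_mem ih ((mem_normalizer_iff.mp (hL hg) _).mp ih')
  | inv g hg ih =>
    have : ⁅x, g⁻¹⁆ = g⁻¹ * ⁅x, g⁆⁻¹ * g⁻¹⁻¹ := by group
    rw [this]
    exact (mem_normalizer_iff.mp (hL (inv_mem hg)) _).mp (inv_mem ih)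

theorem mem_normalizer_of_conj_mem {H : Subgroup G} {g : G}
    (h₁ : ∀ h ∈ H, g * h * g⁻¹ ∈ H) (h₂ : ∀ h ∈ H, g⁻¹ * h * g ∈ H) :
    g ∈ normalizer (H : Set G) :=
  mem_normalizer_iff.mpr fun h => ⟨h₁ h, fun hh => by simpa [mul_assoc] using h₂ _ hh⟩

theorem isNilpotent_of_commutator_le (H : Subgroup G) (P : ℕ → Subgroup G) (h₀ : ⁅H, H⁆ ≤ P 0)
    (hP : ∀ j, ⁅P j, H⁆ ≤ P (j + 1)) {n : ℕ} (hn : P n = ⊥) : Group.IsNilpotent H := by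
  rw [nilpotent_iff_finite_descending_central_series]
  refine ⟨n + 1, fun j => Nat.casesOn j ⊤ fun j => (P j).subgroupOf H, ⟨rfl, ?_⟩, by simp [hn]⟩
  rintro x (_ | j) hx g
  · exact mem_subgroupOf.mpr (h₀ (commutator_mem_commutator x.2 g.2))
  · exact hP j (commutator_mem_commutator hx g.2)

theorem commutator_sup_zpowers_le (N : Subgroup G) [N.Normal] (s : G) :
    ⁅N ⊔ zpowers s, N ⊔ zpowers s⁆ ≤ N := by
  have hmap : (N ⊔ zpowers s).map (QuotientGroup.mk' N) = zpowers (s : G ⧸ N) := by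
    rw [map_sup, QuotientGroup.map_mk'_self, bot_sup_eq, MonoidHom.map_zpowers]
    rfl
  rw [commutator_le]
  intro x hx y hy
  obtain ⟨a, ha⟩ := mem_zpowers_iff.mp (hmap ▸ mem_map_of_mem _ hx)
  obtain ⟨b, hb⟩ := mem_zpowers_iff.mp (hmap ▸ mem_map_of_mem _ hy)
  rw [← QuotientGroup.eq_one_iff, ← QuotientGroup.mk'_apply, map_commutatorElement, ← ha, ← hb,
    commutatorElement_eq_one_iff_commute]
  exact Commute.zpow_zpow_self _ _ _

theorem finiteIndex_sup_zpowers_pow {N : Subgroup G} [N.Normal] {t : G}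
    (h : N ⊔ zpowers t = ⊤) {m : ℕ} (hm : 0 < m) : (N ⊔ zpowers (t ^ m)).FiniteIndex := by
  suffices Function.Surjective fun r : Fin m => ((t ^ (r : ℕ) : G) : G ⧸ N ⊔ zpowers (t ^ m)) by
    have := Finite.of_surjective _ this
    exact finiteIndex_of_finite_quotient
  intro γ
  induction γ using QuotientGroup.induction_on with | H γ => ?_
  obtain ⟨y, hy, x, hx, rfl⟩ := mem_sup_of_normal_right.mp (sup_comm N _ ▸ h ▸ mem_top γ)
  obtain ⟨j, rfl⟩ := mem_zpowers_iff.mp hy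
  have hr₀ : 0 ≤ j % m := Int.emod_nonneg j (by omega)
  have hr₁ : j % m < m := Int.emod_lt_of_pos j (by omega)
  refine ⟨⟨(j % m).toNat, by omega⟩, QuotientGroup.eq.mpr ?_⟩
  have hj : t ^ j = t ^ (j % m).toNat * (t ^ m) ^ (j / m) := by
    rw [← zpow_natCast, Int.toNat_of_nonneg hr₀, ← zpow_natCast t m, ← zpow_mul, ← zpow_add,
      Int.emod_add_mul_ediv]
  rw [hj, mul_assoc, inv_mul_cancel_left]
  exact mul_mem (mem_sup_right (zpow_mem (mem_zpowers _) _)) (mem_sup_left hx)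

end Subgroup

section LatticeSubgroups

open Matrix

variable {Γ : Type*} [Group Γ] {k : ℕ} {N : Subgroup Γ} (e : N ≃* Multiplicative (Fin k → ℤ))

def ofVec (v : Fin k → ℤ) : Γ := e.symm (.ofAdd v)

theorem ofVec_mem (v : Fin k → ℤ) : ofVec e v ∈ N := (e.symm _).2

theorem ofVec_add (v w : Fin k → ℤ) : ofVec e (v + w) = ofVec e v * ofVec e w := by
  simp [ofVec, ofAdd_add]

theorem ofVec_neg (v : Fin k → ℤ) : ofVec e (-v) = (ofVec e v)⁻¹ := by
  simp [ofVec, ofAdd_neg]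

theorem ofVec_zero : ofVec e 0 = 1 := by
  simp [ofVec]

theorem exists_ofVec_eq {x : Γ} (hx : x ∈ N) : ∃ v, ofVec e v = x :=
  ⟨(e ⟨x, hx⟩).toAdd, by simp [ofVec]⟩

theorem commute_of_mem (e : N ≃* Multiplicative (Fin k → ℤ)) {x y : Γ} (hx : x ∈ N)
    (hy : y ∈ N) : Commute x y := by
  obtain ⟨v, rfl⟩ := exists_ofVec_eq e hx
  obtain ⟨w, rfl⟩ := exists_ofVec_eq e hy
  rw [Commute, SemiconjBy, ← ofVec_add, ← ofVec_add, add_comm]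

def vecSubgroup (M : Matrix (Fin k) (Fin k) ℤ) : Subgroup Γ where
  carrier := Set.range fun v => ofVec e (M *ᵥ v)
  one_mem' := ⟨0, by simp [ofVec_zero]⟩
  mul_mem' := by
    rintro _ _ ⟨v, rfl⟩ ⟨w, rfl⟩
    exact ⟨v + w, by simp [mulVec_add, ofVec_add]⟩
  inv_mem' := by
    rintro _ ⟨v, rfl⟩
    exact ⟨-v, by simp [mulVec_neg, ofVec_neg]⟩

theorem vecSubgroup_le (M : Matrix (Fin k) (Fin k) ℤ) : vecSubgroup e M ≤ N := by
  rintro _ ⟨v, rfl⟩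
  exact ofVec_mem e _

theorem vecSubgroup_one : vecSubgroup e 1 = N := by
  refine le_antisymm (vecSubgroup_le e 1) fun x hx => ?_
  obtain ⟨v, rfl⟩ := exists_ofVec_eq e hx
  exact ⟨v, by simp⟩

theorem vecSubgroup_zero : vecSubgroup e 0 = ⊥ := by
  ext x
  simp [vecSubgroup, ofVec_zero]

variable {e} {s : Γ}

theorem conj_pow_ofVec {A : Matrix (Fin k) (Fin k) ℤ}
    (hs : ∀ v, s * ofVec e v * s⁻¹ = ofVec e (A *ᵥ v)) (j : ℕ) (v : Fin k → ℤ) :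
    s ^ j * ofVec e v * (s ^ j)⁻¹ = ofVec e ((A ^ j) *ᵥ v) := by
  induction j with
  | zero => simp
  | succ j ih => rw [pow_succ', pow_succ', ← mulVec_mulVec, ← hs, ← ih]; group

theorem conj_inv_ofVec {u : (Matrix (Fin k) (Fin k) ℤ)ˣ}
    (hs : ∀ v, s * ofVec e v * s⁻¹ = ofVec e (↑u *ᵥ v)) (v : Fin k → ℤ) :
    s⁻¹ * ofVec e v * s⁻¹⁻¹ = ofVec e (↑u⁻¹ *ᵥ v) := by
  have hv : v = ↑u *ᵥ ((↑u⁻¹ : Matrix (Fin k) (Fin k) ℤ) *ᵥ v) := by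
    rw [mulVec_mulVec, Units.mul_inv, one_mulVec]
  conv_lhs => rw [hv, ← hs]
  group

theorem conj_mem_vecSubgroup {U M : Matrix (Fin k) (Fin k) ℤ}
    (hs : ∀ v, s * ofVec e v * s⁻¹ = ofVec e (U *ᵥ v)) (hUM : Commute U M) {x : Γ}
    (hx : x ∈ vecSubgroup e M) : s * x * s⁻¹ ∈ vecSubgroup e M := by
  obtain ⟨v, rfl⟩ := hx
  exact ⟨U *ᵥ v, by simp only [hs, mulVec_mulVec, hUM.eq]⟩

theorem closure_le_normalizer_vecSubgroup {U M : Matrix (Fin k) (Fin k) ℤ} (hU : IsUnit U)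
    (hs : ∀ v, s * ofVec e v * s⁻¹ = ofVec e (U *ᵥ v)) (hUM : Commute U M) :
    closure (N ∪ {s}) ≤ normalizer (vecSubgroup e M : Set Γ) := by
  obtain ⟨u, rfl⟩ := hU
  rw [Subgroup.closure_le]
  rintro g (hg | rfl)
  · exact centralizer_le_normalizer _ <| mem_centralizer_iff.mpr fun x hx =>
      (commute_of_mem e (vecSubgroup_le e M hx) hg).eq
  · refine mem_normalizer_of_conj_mem (fun x hx => conj_mem_vecSubgroup hs hUM hx) fun x hx => ?_
    simpa using conj_mem_vecSubgroup (conj_inv_ofVec hs) hUM.units_inv_left hx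

theorem commutator_mem_vecSubgroup {U M : Matrix (Fin k) (Fin k) ℤ}
    (hs : ∀ v, s * ofVec e v * s⁻¹ = ofVec e (U *ᵥ v)) {x : Γ} (hx : x ∈ vecSubgroup e M) :
    ⁅x, s⁆ ∈ vecSubgroup e ((U - 1) * M) := by
  obtain ⟨v, rfl⟩ := hx
  refine ⟨-v, ?_⟩
  rw [commutatorElement_def, mul_assoc, mul_assoc, ← mul_assoc s, ← ofVec_neg, hs, ← ofVec_add]
  change ofVec e (((U - 1) * M) *ᵥ -v) = _
  rw [sub_mul, one_mul, sub_mulVec, ← mulVec_mulVec, mulVec_neg, mulVec_neg]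
  congr 1
  abel

end LatticeSubgroups

theorem virtually_nilpotent_of_unit_eigenvalues_general {Γ : Type*} [Group Γ] (k : ℕ)
    (N : Subgroup Γ) (hN : N.Normal)
    (e : N ≃* Multiplicative (Fin k → ℤ)) (t : Γ)
    (hgen : Subgroup.closure ((N : Set Γ) ∪ {t}) = ⊤)
    (A : Matrix (Fin k) (Fin k) ℤ)
    (hconj : ∀ n : N,
      e ⟨t * (n : Γ) * t⁻¹, hN.conj_mem (n : Γ) n.2 t⟩ =
        Multiplicative.ofAdd (A.mulVec (Multiplicative.toAdd (e n))))
    (heig : ∀ μ : ℂ, ((A.map (Int.cast : ℤ → ℂ)).charpoly).IsRoot μ → ‖μ‖ = 1) :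
    ∃ H : Subgroup Γ, H.FiniteIndex ∧ Group.IsNilpotent H := by
  obtain ⟨m, hm, hnil⟩ := A.exists_isNilpotent_pow_sub_one_of_norm_eq_one heig
  obtain ⟨n, hn⟩ := id hnil
  have ht : ∀ v, t * ofVec e v * t⁻¹ = ofVec e (A.mulVec v) := fun v => by
    simpa [ofVec] using congrArg (fun x => ((e.symm x : N) : Γ)) (hconj (e.symm (.ofAdd v)))
  have hs := conj_pow_ofVec ht m
  have hsup : ∀ s : Γ, N ⊔ zpowers s = closure (N ∪ {s}) := fun s => by
    rw [Subgroup.closure_union, closure_eq, zpowers_eq_closure]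
  refine ⟨N ⊔ zpowers (t ^ m), finiteIndex_sup_zpowers_pow ((hsup t).trans hgen) hm,
    isNilpotent_of_commutator_le _ (fun j => vecSubgroup e ((A ^ m - 1) ^ j)) ?_ (fun j => ?_)
      (n := n) (by simp [hn, vecSubgroup_zero])⟩
  · simpa [vecSubgroup_one] using commutator_sup_zpowers_le N (t ^ m)
  rw [hsup]
  refine commutator_closure_le (closure_le_normalizer_vecSubgroup
    (by simpa using hnil.isUnit_add_one) hs
    (((Commute.refl _).sub_right (Commute.one_right _)).pow_right _)) ?_
  rintro g (hg | rfl) x hx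
  · rw [commutatorElement_eq_one_iff_commute.mpr (commute_of_mem e (vecSubgroup_le e _ hx) hg)]
    exact one_mem _
  · simpa [pow_succ'] using commutator_mem_vecSubgroup hs hx

/-- Let `Γ = Z^k ⋊_ρ Z`, presented as a group with a normal subgroup `N ≅ ℤ^k` and an
element `t` such that `N` and `t` generate `Γ`, `Γ/N` is generated by the image of `t`
freely (`t^j ∈ N` only for `j = 0`), and conjugation by `t` acts on `N ≅ ℤ^k` as a
matrix `A ∈ GL(k,ℤ)`. If all complex eigenvalues of `A` have absolute value `1`,
then `Γ` is virtually nilpotent. -/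
theorem virtually_nilpotent_of_unit_eigenvalues {Γ : Type*} [Group Γ] (k : ℕ)
    (N : Subgroup Γ) (hN : N.Normal)
    (e : N ≃* Multiplicative (Fin k → ℤ)) (t : Γ)
    (hgen : Subgroup.closure ((N : Set Γ) ∪ {t}) = ⊤)
    (hfree : ∀ j : ℤ, t ^ j ∈ N → j = 0)
    (A : Matrix (Fin k) (Fin k) ℤ) (hA : IsUnit A.det)
    (hconj : ∀ n : N,
      e ⟨t * (n : Γ) * t⁻¹, hN.conj_mem (n : Γ) n.2 t⟩ =
        Multiplicative.ofAdd (A.mulVec (Multiplicative.toAdd (e n))))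
    (heig : ∀ μ : ℂ, ((A.map (Int.cast : ℤ → ℂ)).charpoly).IsRoot μ → ‖μ‖ = 1) :
    ∃ H : Subgroup Γ, H.FiniteIndex ∧ Group.IsNilpotent H :=
  virtually_nilpotent_of_unit_eigenvalues_general k N hN e t hgen A hconj heig
end

section
/- Let A be a set of commuting diagonalizable automorphisms of a finite-dimensional real vector space, each of whose eigenvalues all have absolute value 1, and suppose each element of A preserves a lattice L. Then the group generated by A is finite. -/
/-!
Diagonalise the complexifications of all elements of `A` simultaneously, in one basis `v` of
`ℂⁿ`. In the coordinates of `v` every element of the monoid generated by `A` acts diagonally with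
entries of modulus one, so this monoid is bounded; it also preserves `L`, and only finitely many
bounded linear maps preserve a lattice, since they are determined by the images of a lattice basis,
which lie in a bounded part of the discrete set `L`. A finite submonoid of a group consists of
elements of finite order, so it already contains the subgroup generated by `A`.
-/

open Matrix Module Set Submodule

theorem Subgroup.finite_closure_of_subset_submonoid {G : Type*} [Group G] {s : Set G}
    (M : Submonoid G) (hM : (M : Set G).Finite) (hs : s ⊆ M) :
    (closure s : Set G).Finite := by
  have hfin : ∀ x ∈ s, IsOfFinOrder x := fun x hx =>
    finite_powers.mp (hM.subset (Submonoid.powers_le.mpr (hs hx)))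
  refine hM.subset ?_
  rw [← coe_toSubmonoid, closure_toSubmonoid_of_isOfFinOrder hfin]
  exact Submonoid.closure_le.mpr hs

theorem AddSubgroup.exists_basis_coe_eq_span {E ι : Type*} [NormedAddCommGroup E] [NormedSpace ℝ E]
    [FiniteDimensional ℝ E] [Fintype ι] (L : AddSubgroup E) (b : Basis ι ℤ L)
    (hspan : span ℝ (L : Set E) = ⊤) (hcard : Fintype.card ι = finrank ℝ E) :
    ∃ w : Basis ι ℝ E, (L : Set E) = span ℤ (range w) := by
  have hL : (L : Set E) = span ℤ (range fun i => (b i : E)) := by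
    have hmap := congrArg (Submodule.map L.subtype.toIntLinearMap) b.span_eq
    rw [Submodule.map_span, Submodule.map_top, ← range_comp] at hmap
    rw [show (fun i => (b i : E)) = L.subtype.toIntLinearMap ∘ b from rfl, hmap]
    ext x
    simp
  have hle : ⊤ ≤ span ℝ (range fun i => (b i : E)) := by
    rw [← hspan, hL, Submodule.span_span_of_tower]
  refine ⟨basisOfTopLeSpanOfCardEqFinrank _ hle hcard, ?_⟩
  rw [coe_basisOfTopLeSpanOfCardEqFinrank, hL]

theorem Module.Basis.finite_setOf_mapsTo_span_of_norm_le {E ι : Type*} [NormedAddCommGroup E]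
    [NormedSpace ℝ E] [FiniteDimensional ℝ E] [Finite ι] (w : Basis ι ℝ E) (K : ℝ) :
    {f : E →ₗ[ℝ] E | MapsTo f (span ℤ (range w)) (span ℤ (range w)) ∧
      ∀ x, ‖f x‖ ≤ K * ‖x‖}.Finite := by
  have hvalues :
      (univ.pi fun i => Metric.closedBall (0 : E) (K * ‖w i‖) ∩ span ℤ (range w)).Finite :=
    Set.Finite.pi fun i => ZSpan.setFinite_inter w Metric.isBounded_closedBall
  refine Set.Finite.of_finite_image (f := fun f i => f (w i)) (hvalues.subset ?_)
    fun f _ g _ hfg => w.ext (congrFun hfg)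
  rintro _ ⟨f, ⟨hL, hK⟩, rfl⟩ i -
  exact ⟨mem_closedBall_zero_iff.mpr (hK (w i)), hL (subset_span (mem_range_self i))⟩

theorem Matrix.finite_setOf_mulVec_mem_of_norm_le {ι : Type*} [Fintype ι] [DecidableEq ι]
    (L : AddSubgroup (ι → ℝ)) (b : Basis ι ℤ L) (hspan : span ℝ (L : Set (ι → ℝ)) = ⊤) (K : ℝ) :
    {g : Matrix ι ι ℝ | (∀ x ∈ L, g *ᵥ x ∈ L) ∧ ∀ x, ‖g *ᵥ x‖ ≤ K * ‖x‖}.Finite := by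
  obtain ⟨w, hw⟩ := L.exists_basis_coe_eq_span b hspan (by simp)
  refine ((w.finite_setOf_mapsTo_span_of_norm_le K).preimage toLin'.injective.injOn).subset ?_
  rintro g ⟨hL, hK⟩
  refine ⟨fun x hx => ?_, hK⟩
  rw [← hw] at hx ⊢
  exact hL x hx

theorem Module.Basis.exists_bound_of_forall_apply_eq_smul {𝕜 V ι : Type*}
    [NontriviallyNormedField 𝕜] [CompleteSpace 𝕜] [NormedAddCommGroup V] [NormedSpace 𝕜 V]
    [Fintype ι] (v : Basis ι 𝕜 V) :
    ∃ K, ∀ T : V →ₗ[𝕜] V, (∀ i, ∃ c : 𝕜, ‖c‖ ≤ 1 ∧ T (v i) = c • v i) →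
      ∀ x, ‖T x‖ ≤ K * ‖x‖ := by
  let φ : V →L[𝕜] ι → 𝕜 := v.equivFunL
  let ψ : (ι → 𝕜) →L[𝕜] V := v.equivFunL.symm
  refine ⟨‖ψ‖ * ‖φ‖, fun T hT x => ?_⟩
  choose c hc hTc using hT
  have hTx : T x = ∑ i, (c i * v.repr x i) • v i := calc
    T x = T (∑ i, v.repr x i • v i) := by rw [v.sum_repr]
    _ = _ := by
      rw [map_sum]
      exact Finset.sum_congr rfl fun i _ => by rw [map_smul, hTc, smul_smul, mul_comm]
  have hφTx : ‖φ (T x)‖ ≤ ‖φ x‖ := by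
    refine pi_norm_le_iff_of_nonneg (norm_nonneg _) |>.mpr fun i => ?_
    change ‖v.repr (T x) i‖ ≤ _
    rw [hTx, v.repr_sum_self, norm_mul]
    exact (mul_le_of_le_one_left (norm_nonneg _) (hc i)).trans (norm_le_pi_norm (φ x) i)
  calc ‖T x‖ = ‖ψ (φ (T x))‖ := by simp [φ, ψ]
    _ ≤ ‖ψ‖ * ‖φ (T x)‖ := ψ.le_opNorm _
    _ ≤ ‖ψ‖ * (‖φ‖ * ‖x‖) := by gcongr; exact hφTx.trans (φ.le_opNorm x)
    _ = ‖ψ‖ * ‖φ‖ * ‖x‖ := (mul_assoc _ _ _).symm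

theorem Matrix.norm_mulVec_le_of_norm_mapMatrix_ofReal_mulVec_le {ι : Type*} [Fintype ι]
    [DecidableEq ι] {g : Matrix ι ι ℝ} {K : ℝ} (h : ∀ y, ‖Complex.ofRealHom.mapMatrix g *ᵥ y‖ ≤ K * ‖y‖)
    (x : ι → ℝ) : ‖g *ᵥ x‖ ≤ K * ‖x‖ := by
  have hnorm : ∀ z : ι → ℝ, ‖fun i => (z i : ℂ)‖ = ‖z‖ := fun z => by simp [Pi.norm_def]
  have hmap : (fun i => ((g *ᵥ x) i : ℂ)) = Complex.ofRealHom.mapMatrix g *ᵥ fun i => (x i : ℂ) :=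
    funext (RingHom.map_mulVec Complex.ofRealHom g x)
  simpa only [← hnorm, hmap] using h fun i => (x i : ℂ)

theorem Matrix.exists_basis_toLin'_conj_diagonal {K n : Type*} [Field K] [Fintype n]
    [DecidableEq n] {P : Matrix n n K} (hP : IsUnit P) (d : n → K) :
    ∃ b : Basis n K (n → K), (P * diagonal d * P⁻¹).toLin' = (diagonal d).toLin b b := by
  have := hP.invertible
  set b := (Pi.basisFun K n).map (P.toLinearEquiv' this)
  have hb : ∀ j, b j = P *ᵥ Pi.single j 1 := fun j => by
    rw [Basis.map_apply, Pi.basisFun_apply]; rfl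
  refine ⟨b, b.ext fun j => ?_⟩
  rw [toLin_self, Fintype.sum_eq_single j fun i hi => by rw [diagonal_apply_ne _ hi, zero_smul],
    diagonal_apply_eq, toLin'_apply, hb, mulVec_mulVec, Matrix.mul_assoc, Matrix.mul_assoc,
    inv_mul_of_invertible, Matrix.mul_one, ← mulVec_mulVec, diagonal_mulVec_single, mul_one,
    ← mulVec_smul, ← Pi.single_smul', smul_eq_mul, mul_one]

theorem Module.End.top_le_span_setOf_forall_apply_eq_smul {ι K V n : Type*} [Field K]
    [AddCommGroup V] [Module K V] [FiniteDimensional K V] [Fintype n] [DecidableEq n]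
    (f : ι → End K V) (hcomm : ∀ i j, Commute (f i) (f j))
    (hdiag : ∀ i, ∃ (b : Basis n K V) (d : n → K), f i = (diagonal d).toLin b b) :
    ⊤ ≤ span K {x | ∀ i, ∃ μ : K, f i x = μ • x} := by
  have hmax : ∀ i μ, (f i).maxGenEigenspace μ = (f i).eigenspace μ := fun i μ => by
    obtain ⟨b, d, hf⟩ := hdiag i
    rw [hf, maxGenEigenspace_toLin_diagonal_eq_eigenspace]
  have htop : ∀ i, ⨆ μ, (f i).maxGenEigenspace μ = ⊤ := fun i => by
    obtain ⟨b, d, hf⟩ := hdiag i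
    simp_rw [hmax, hf, iSup_eigenspace_toLin_diagonal_eq_top]
  rw [← iSup_iInf_maxGenEigenspace_eq_top_of_iSup_maxGenEigenspace_eq_top_of_commute f
    (fun i j _ => hcomm i j) htop]
  refine iSup_le fun χ x hx => subset_span fun i => ⟨χ i, ?_⟩
  have hxi := (Submodule.mem_iInf _).mp hx i
  rwa [hmax, mem_eigenspace_iff] at hxi

theorem Matrix.mem_range_of_conj_diagonal_mulVec_eq_smul {K n : Type*} [Field K] [Fintype n]
    [DecidableEq n] {P : Matrix n n K} (hP : IsUnit P) (d : n → K) {x : n → K} (hx : x ≠ 0)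
    {c : K} (h : (P * diagonal d * P⁻¹) *ᵥ x = c • x) : c ∈ range d := by
  have hc : Module.End.HasEigenvalue (P * diagonal d * P⁻¹).toLin' c :=
    Module.End.hasEigenvalue_of_hasEigenvector ⟨Module.End.mem_eigenspace_iff.mpr h, hx⟩
  rw [Module.End.hasEigenvalue_iff_mem_spectrum, spectrum_toLin'] at hc
  obtain ⟨u, rfl⟩ := hP
  rwa [← coe_units_inv, spectrum.units_conjugate, spectrum_diagonal] at hc

theorem Matrix.exists_basis_forall_mulVec_eq_smul {ι K n : Type*} [Field K] [Fintype n]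
    [DecidableEq n] (f : ι → Matrix n n K) (hcomm : ∀ i j, Commute (f i) (f j))
    (hdiag : ∀ i, ∃ P : Matrix n n K, IsUnit P ∧ ∃ d, f i = P * diagonal d * P⁻¹) :
    ∃ v : Basis n K (n → K), ∀ i k, ∃ μ : K, f i *ᵥ v k = μ • v k := by
  have hspan := Module.End.top_le_span_setOf_forall_apply_eq_smul (fun i => (f i).toLin')
    (fun i j => (hcomm i j).map toLinAlgEquiv') fun i => by
      obtain ⟨P, hP, d, hf⟩ := hdiag i
      obtain ⟨b, hb⟩ := exists_basis_toLin'_conj_diagonal hP d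
      exact ⟨b, d, hf ▸ hb⟩
  let v := Basis.ofSpan hspan
  refine ⟨v.reindex (v.indexEquiv (Pi.basisFun K n)), fun i k => ?_⟩
  rw [Basis.reindex_apply]
  exact Basis.ofSpan_subset hspan (mem_range_self _) i

namespace Matrix.GeneralLinearGroup

variable {ι κ : Type*} [Fintype ι] [DecidableEq ι]

def latticeUnitEigenSubmonoid (L : AddSubgroup (ι → ℝ)) (v : Basis κ ℂ (ι → ℂ)) :
    Submonoid (GL ι ℝ) where
  carrier := {g | (∀ x ∈ L, (g : Matrix ι ι ℝ) *ᵥ x ∈ L) ∧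
    ∀ k, ∃ c : ℂ, ‖c‖ = 1 ∧ Complex.ofRealHom.mapMatrix (g : Matrix ι ι ℝ) *ᵥ v k = c • v k}
  mul_mem' := by
    rintro g h ⟨hgL, hgv⟩ ⟨hhL, hhv⟩
    refine ⟨fun x hx => ?_, fun k => ?_⟩
    · rw [Units.val_mul, ← mulVec_mulVec]
      exact hgL _ (hhL x hx)
    · obtain ⟨c, hc, hgk⟩ := hgv k
      obtain ⟨c', hc', hhk⟩ := hhv k
      refine ⟨c * c', by rw [norm_mul, hc, hc', one_mul], ?_⟩
      rw [Units.val_mul, map_mul, ← mulVec_mulVec, hhk, mulVec_smul, hgk, smul_smul,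
        mul_comm]
  one_mem' := ⟨fun x hx => by rwa [Units.val_one, one_mulVec],
    fun k => ⟨1, norm_one, by simp⟩⟩

theorem finite_latticeUnitEigenSubmonoid [Fintype κ] (L : AddSubgroup (ι → ℝ)) (b : Basis ι ℤ L)
    (hspan : span ℝ (L : Set (ι → ℝ)) = ⊤) (v : Basis κ ℂ (ι → ℂ)) :
    (latticeUnitEigenSubmonoid L v : Set (GL ι ℝ)).Finite := by
  obtain ⟨K, hK⟩ := v.exists_bound_of_forall_apply_eq_smul
  refine ((finite_setOf_mulVec_mem_of_norm_le L b hspan K).preimage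
    Units.val_injective.injOn).subset fun g ⟨hL, hv⟩ => ⟨hL, ?_⟩
  refine norm_mulVec_le_of_norm_mapMatrix_ofReal_mulVec_le <| hK (Matrix.toLin' _) fun k => ?_
  obtain ⟨c, hc, hk⟩ := hv k
  exact ⟨c, hc.le, hk⟩

end Matrix.GeneralLinearGroup

/-- Let `A` be a set of commuting diagonalizable automorphisms of `ℝ^n`, each with all
(complex) eigenvalues of absolute value `1`, and suppose each element of `A` preserves a
lattice `L` (a discrete cocompact `ℤ`-span of a basis, formalized as an additive subgroup
with a `ℤ`-basis of size `n` that spans `ℝ^n`). Then the group generated by `A` is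
finite. -/
theorem finite_group_of_commuting_unit_eigenvalue_lattice_preserving (n : ℕ)
    (A : Set (Matrix.GeneralLinearGroup (Fin n) ℝ))
    (hcomm : ∀ a ∈ A, ∀ b ∈ A, a * b = b * a)
    (hdiag : ∀ a ∈ A, ∃ P : Matrix (Fin n) (Fin n) ℂ, IsUnit P ∧
      ∃ d : Fin n → ℂ, (∀ i, ‖d i‖ = 1) ∧
        ((a : Matrix (Fin n) (Fin n) ℝ).map (Complex.ofReal)) =
          P * Matrix.diagonal d * P⁻¹)
    (L : AddSubgroup (Fin n → ℝ)) (b : Module.Basis (Fin n) ℤ L)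
    (hspan : Submodule.span ℝ (L : Set (Fin n → ℝ)) = ⊤)
    (hpres : ∀ a ∈ A, ∀ v ∈ L, (a : Matrix (Fin n) (Fin n) ℝ).mulVec v ∈ L) :
    (Subgroup.closure A : Set (Matrix.GeneralLinearGroup (Fin n) ℝ)).Finite := by
  obtain ⟨v, hv⟩ := exists_basis_forall_mulVec_eq_smul
    (fun a : A => ((a : GL (Fin n) ℝ) : Matrix (Fin n) (Fin n) ℝ).map Complex.ofReal)
    (fun a a' => (Commute.units_val (hcomm a a.2 a' a'.2)).map Complex.ofRealHom.mapMatrix)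
    fun a => by
      obtain ⟨P, hP, d, -, h⟩ := hdiag a a.2
      exact ⟨P, hP, d, h⟩
  refine Subgroup.finite_closure_of_subset_submonoid _
    (GeneralLinearGroup.finite_latticeUnitEigenSubmonoid L b hspan v)
    fun a ha => ⟨hpres a ha, fun k => ?_⟩
  obtain ⟨c, hc⟩ := hv ⟨a, ha⟩ k
  obtain ⟨P, hP, d, hd, had⟩ := hdiag a ha
  obtain ⟨i, rfl⟩ := mem_range_of_conj_diagonal_mulVec_eq_smul hP d (v.ne_zero k) (had ▸ hc)
  exact ⟨d i, hd i, hc⟩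
end
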